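/- arXiv:0805.2977 — 5 statements merged into one kernel-verified Lean document; each statement's English description precedes it below -/
import Mathlib

section
/- The tensor rank of the 2×2 matrix multiplication tensor is at most 7; that is, the bilinear forms f_{ij} = Σ_k a_{ik} b_{kj} (i,j,k ∈ {0,1}) can be computed using 7 non-scalar multiplications, i.e., there exist linear forms u_1,...,u_7 in the a-variables, v_1,...,v_7 in the b-variables, and scalars c_{ij,ℓ} such that f_{ij} = Σ_{ℓ=1}^7 c_{ij,ℓ} u_ℓ v_ℓ. -/
/-- Strassen: 2×2 matrix multiplication with 7 non-scalar multiplications. -/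
theorem strassen_upper_bound :
    ∃ (u v : Fin 7 → Fin 2 → Fin 2 → ℂ) (c : Fin 2 → Fin 2 → Fin 7 → ℂ),
      ∀ (a b : Fin 2 → Fin 2 → ℂ) (i j : Fin 2),
        (∑ k, a i k * b k j) =
          ∑ l, c i j l * (∑ p, ∑ q, u l p q * a p q) * (∑ p, ∑ q, v l p q * b p q) := by
  refine ⟨![![![1,0],![0,1]], ![![0,0],![1,1]], ![![1,0],![0,0]], ![![0,0],![0,1]],
           ![![1,1],![0,0]], ![![-1,0],![1,0]], ![![0,1],![0,-1]]],
          ![![![1,0],![0,1]], ![![1,0],![0,0]], ![![0,1],![0,-1]], ![![-1,0],![1,0]],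
           ![![0,0],![0,1]], ![![1,1],![0,0]], ![![0,0],![1,1]]],
          ![![![1,0,0,1,-1,0,1], ![0,0,1,0,1,0,0]],
            ![![0,1,0,1,0,0,0], ![1,-1,1,0,0,1,0]]], ?_⟩
  intro a b i j
  fin_cases i <;> fin_cases j <;>
    simp [Fin.sum_univ_succ] <;> ring
end

section
/- The tensor rank of the two-copy W state |W⟩^{⊗2} is at most 8. Equivalently, viewing |W⟩^{⊗2} as a tripartite tensor in (ℂ^2⊗ℂ^2)^{⊗3} after grouping each party's two qubits, it can be written as a sum of 8 elementary tensors. -/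
/-- Tensor rank of a tripartite tensor: minimum number of elementary tensors summing to it. -/
noncomputable def trank {ιA ιB ιC : Type*} (φ : ιA → ιB → ιC → ℂ) : ℕ :=
  sInf {r : ℕ | ∃ (a : Fin r → ιA → ℂ) (b : Fin r → ιB → ℂ) (c : Fin r → ιC → ℂ),
    ∀ i j k, φ i j k = ∑ l, a l i * b l j * c l k}

/-- The (unnormalized) W state |001⟩ + |010⟩ + |100⟩. -/
def Wstate : Fin 2 → Fin 2 → Fin 2 → ℂ :=
  fun i j k => if (i : ℕ) + (j : ℕ) + (k : ℕ) = 1 then 1 else 0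

/-- A-side linear forms of an explicit 8-term decomposition of W⊗W (integer tables). -/
def decompA : Fin 8 → Fin 2 → Fin 2 → ℤ
  | 0 => fun i j => if i = 0 ∧ j = 0 then 1 else 0
  | 1 => fun i j => if j = 0 then 1 else 0
  | 2 => fun i j => if i = 1 ∧ j = 0 then 1 else 0
  | 3 => fun i j => if i = 0 then 1 else 0
  | 4 => fun i j => if i = 0 ∧ j = 1 then 1 else 0
  | 5 => fun i j => if i = 0 ∧ j = 0 then 1 else 0
  | 6 => fun i j => if i = 0 ∧ j = 1 then -1 else if i = 1 ∧ j = 0 then 1 else 0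
  | 7 => fun i j => if i = 0 ∧ j = 1 then -2 else if i = 1 ∧ j = 1 then 1 else 0

def decompB : Fin 8 → Fin 2 → Fin 2 → ℤ
  | 0 => fun i j => if i = 0 ∧ j = 0 then 1 else 0
  | 1 => fun i j => if j = 0 then 1 else 0
  | 2 => fun i j => if i = 1 ∧ j = 0 then 1 else 0
  | 3 => fun i j => if i = 0 then 1 else 0
  | 4 => fun i j => if i = 0 ∧ j = 1 then 1 else 0
  | 5 => fun i j => if i = 0 ∧ j = 0 then 0 else if i = 1 ∧ j = 1 then 1 else -1
  | 6 => fun i j => if i = 0 ∧ j = 1 then 1 else if i = 1 ∧ j = 1 then 0 else -1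
  | 7 => fun i j => if i = 0 ∧ j = 0 then 1 else 0

def decompC : Fin 8 → Fin 2 → Fin 2 → ℤ
  | 0 => fun i j => if i = 0 ∧ j = 0 then -2 else if i = 1 ∧ j = 1 then 1 else -1
  | 1 => fun i j => if i = 0 then 1 else 0
  | 2 => fun i j => if i = 0 ∧ j = 1 then -1 else 0
  | 3 => fun i j => if j = 0 then 1 else 0
  | 4 => fun i j => if i = 1 ∧ j = 0 then -1 else 0
  | 5 => fun i j => if i = 0 ∧ j = 0 then 1 else 0
  | 6 => fun i j => if i = 0 ∧ j = 0 then 1 else 0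
  | 7 => fun i j => if i = 0 ∧ j = 0 then 1 else 0

/-- Integer-level verification of the decomposition identity, by `decide`. -/
lemma decomp_check : ∀ p q r : Fin 2 × Fin 2,
    (if (p.1 : ℕ) + (q.1 : ℕ) + (r.1 : ℕ) = 1 then (1 : ℤ) else 0) *
      (if (p.2 : ℕ) + (q.2 : ℕ) + (r.2 : ℕ) = 1 then (1 : ℤ) else 0) =
    ∑ l : Fin 8, decompA l p.1 p.2 * decompB l q.1 q.2 * decompC l r.1 r.2 := by
  decide

/-- The tensor rank of |W⟩^{⊗2}, grouped tripartitely, is at most 8; in particular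
tensor rank (Schmidt measure) is not multiplicative (additive). -/
theorem trank_W_two_copies_le_eight :
    trank (fun p q r : Fin 2 × Fin 2 => Wstate p.1 q.1 r.1 * Wstate p.2 q.2 r.2) ≤ 8 := by
  apply Nat.sInf_le
  refine ⟨fun l p => (decompA l p.1 p.2 : ℂ), fun l q => (decompB l q.1 q.2 : ℂ),
    fun l r => (decompC l r.1 r.2 : ℂ), ?_⟩
  intro p q r
  have h := decomp_check p q r
  have : ((if (p.1 : ℕ) + (q.1 : ℕ) + (r.1 : ℕ) = 1 then (1 : ℤ) else 0) *
      (if (p.2 : ℕ) + (q.2 : ℕ) + (r.2 : ℕ) = 1 then (1 : ℤ) else 0) : ℂ) =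
      ((∑ l : Fin 8, decompA l p.1 p.2 * decompB l q.1 q.2 * decompC l r.1 r.2 : ℤ) : ℂ) := by
    exact_mod_cast congrArg (fun z : ℤ => (z : ℂ)) h
  simpa [Wstate, apply_ite (fun z : ℤ => (z : ℂ))] using this
end

section
/- The tensor rank of the single W state |W⟩ = |001⟩ + |010⟩ + |100⟩ is exactly 3. -/
/-!
Contracting the third factor of `W` with `x` gives the matrix `!![x 1, x 0; x 0, 0]`, whose
determinant is `-(x 0)^2`. A decomposition `∑_{l<2} a_l ⊗ b_l ⊗ c_l` factors this contraction as
`Aᵀ * diagonal (ℓ_0 x, ℓ_1 x) * B` with `ℓ_l x = ∑ k, c_l k * x k`, so the determinant vanishes on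
the kernel of each `ℓ_l`. Evaluating at `x = (-c_l 1, c_l 0)` forces `c_l 1 = 0` for both `l`, and
then the slice `W(·, ·, 1)` would vanish.
-/

open Matrix

section TensorDecomposition

variable {R : Type*} [CommRing R] {ιA ιB ιC : Type*}

def HasTensorDecomposition (φ : ιA → ιB → ιC → R) (r : ℕ) : Prop :=
  ∃ (a : Fin r → ιA → R) (b : Fin r → ιB → R) (c : Fin r → ιC → R),
    ∀ i j k, φ i j k = ∑ l, a l i * b l j * c l k

theorem HasTensorDecomposition.succ {φ : ιA → ιB → ιC → R} {r : ℕ}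
    (h : HasTensorDecomposition φ r) : HasTensorDecomposition φ (r + 1) := by
  obtain ⟨a, b, c, h⟩ := h
  refine ⟨Fin.cons 0 a, Fin.cons 0 b, Fin.cons 0 c, fun i j k => ?_⟩
  simp [Fin.sum_univ_succ, h]

theorem HasTensorDecomposition.mono {φ : ιA → ιB → ιC → R} {r s : ℕ}
    (h : HasTensorDecomposition φ r) (hrs : r ≤ s) : HasTensorDecomposition φ s := by
  induction s, hrs using Nat.le_induction with
  | base => exact h
  | succ s _ ih => exact ih.succ

theorem trank_eq_succ_iff (φ : ιA → ιB → ιC → ℂ) (n : ℕ) :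
    trank φ = n + 1 ↔ HasTensorDecomposition φ (n + 1) ∧ ¬HasTensorDecomposition φ n :=
  Nat.sInf_upward_closed_eq_succ_iff
    (fun _ _ hrs (h : HasTensorDecomposition φ _) => h.mono hrs) n

def contractLast [Fintype ιC] (φ : ιA → ιB → ιC → R) (x : ιC → R) : Matrix ιA ιB R :=
  Matrix.of fun i j => ∑ k, φ i j k * x k

theorem contractLast_eq_mul [Fintype ιC] {r : ℕ} {φ : ιA → ιB → ιC → R}
    {a : Fin r → ιA → R} {b : Fin r → ιB → R} {c : Fin r → ιC → R}
    (h : ∀ i j k, φ i j k = ∑ l, a l i * b l j * c l k) (x : ιC → R) :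
    contractLast φ x = (Matrix.of a)ᵀ * diagonal (fun l => ∑ k, c l k * x k) * Matrix.of b := by
  ext i j
  simp only [contractLast, h, mul_apply, of_apply, transpose_apply, diagonal_apply,
    mul_ite, mul_zero, Finset.sum_ite_eq', Finset.mem_univ, if_true, Finset.sum_mul,
    Finset.mul_sum]
  rw [Finset.sum_comm]
  exact Finset.sum_congr rfl fun _ _ => Finset.sum_congr rfl fun _ _ => by ring

theorem det_contractLast_eq_zero [Fintype ιC] {n : ℕ} {φ : Fin n → Fin n → ιC → R}
    {a b : Fin n → Fin n → R} {c : Fin n → ιC → R}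
    (h : ∀ i j k, φ i j k = ∑ l, a l i * b l j * c l k) {x : ιC → R} {l : Fin n}
    (hl : ∑ k, c l k * x k = 0) : (contractLast φ x).det = 0 := by
  rw [contractLast_eq_mul h, det_mul, det_mul, det_diagonal,
    Finset.prod_eq_zero (Finset.mem_univ l) hl, mul_zero, zero_mul]

end TensorDecomposition

theorem det_contractLast_Wstate (x : Fin 2 → ℂ) : (contractLast Wstate x).det = -x 0 ^ 2 := by
  have hW : contractLast Wstate x = !![x 1, x 0; x 0, 0] := by
    ext i j
    fin_cases i <;> fin_cases j <;> simp [contractLast, Wstate]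
  rw [hW, det_fin_two_of]
  ring

theorem hasTensorDecomposition_Wstate_three : HasTensorDecomposition Wstate 3 := by
  refine ⟨![![1, 0], ![1, 0], ![0, 1]], ![![1, 0], ![0, 1], ![1, 0]],
    ![![0, 1], ![1, 0], ![1, 0]], fun i j k => ?_⟩
  fin_cases i <;> fin_cases j <;> fin_cases k <;> simp [Wstate, Fin.sum_univ_three]

theorem not_hasTensorDecomposition_Wstate_two : ¬HasTensorDecomposition Wstate 2 := by
  rintro ⟨a, b, c, h⟩
  have hc : ∀ l, c l 1 = 0 := fun l => by
    have hdet := det_contractLast_eq_zero h (x := ![-c l 1, c l 0]) (l := l)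
      (by simp [Fin.sum_univ_two]; ring)
    simpa [det_contractLast_Wstate] using hdet
  simpa [Wstate, hc] using h 0 0 1

/-- The tensor rank of the W state is exactly 3. -/
theorem trank_W : trank Wstate = 3 :=
  (trank_eq_succ_iff Wstate 2).2
    ⟨hasTensorDecomposition_Wstate_three, not_hasTensorDecomposition_Wstate_two⟩
end

section
/- The tensor rank of the GHZ state |GHZ⟩ = |000⟩ + |111⟩ is exactly 2, and the tensor rank of |GHZ⟩^{⊗n} (as a tripartite tensor with each party's n qubits grouped together) is exactly 2^n. -/
/-- The (unnormalized) GHZ state |000⟩ + |111⟩. -/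
def GHZ : Fin 2 → Fin 2 → Fin 2 → ℂ :=
  fun i j k => if i = j ∧ j = k then 1 else 0

/-!
The upper bound comes from the decomposition `Σ_i e_i ⊗ e_i ⊗ e_i` of the unit tensor. For the
lower bound, flatten a tensor `φ = Σ_{l < r} a_l ⊗ b_l ⊗ c_l` to the family of its slices
`φ i ∈ ℂ^(ιB × ιC)`: they all lie in the span of the `r` vectors `b_l ⊗ c_l`, so if they are
linearly independent there are at most `r` of them. The slices of the unit tensor are the
distinct standard basis vectors `e_(i,i)`. Finally `GHZ^{⊗n}` is the unit tensor on `Fin n → Fin 2`.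
-/

section TensorRank

variable {ιA ιB ιC : Type*}

def flatten (φ : ιA → ιB → ιC → ℂ) : ιA → ιB × ιC → ℂ :=
  fun i p => φ i p.1 p.2

theorem trank_le_of_eq_sum {φ : ιA → ιB → ιC → ℂ} {r : ℕ} (a : Fin r → ιA → ℂ)
    (b : Fin r → ιB → ℂ) (c : Fin r → ιC → ℂ)
    (h : ∀ i j k, φ i j k = ∑ l, a l i * b l j * c l k) : trank φ ≤ r :=
  Nat.sInf_le ⟨a, b, c, h⟩

theorem card_le_of_linearIndependent_of_eq_sum [Fintype ιA] {φ : ιA → ιB → ιC → ℂ}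
    (hφ : LinearIndependent ℂ (flatten φ)) {r : ℕ}
    (a : Fin r → ιA → ℂ) (b : Fin r → ιB → ℂ) (c : Fin r → ιC → ℂ)
    (h : ∀ i j k, φ i j k = ∑ l, a l i * b l j * c l k) : Fintype.card ιA ≤ r := by
  set w : Fin r → ιB × ιC → ℂ := fun l p => b l p.1 * c l p.2
  have hslice : ∀ i, flatten φ i = ∑ l, a l i • w l := by
    intro i
    ext p
    simp [flatten, w, h, Finset.sum_apply, mul_assoc]
  have hspan : Submodule.span ℂ (Set.range (flatten φ)) ≤
      Submodule.span ℂ (Set.range w) := by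
    refine Submodule.span_le.2 ?_
    rintro _ ⟨i, rfl⟩
    rw [SetLike.mem_coe, hslice]
    exact Submodule.sum_mem _ fun l _ => Submodule.smul_mem _ _ (Submodule.subset_span ⟨l, rfl⟩)
  have : FiniteDimensional ℂ (Submodule.span ℂ (Set.range w)) :=
    FiniteDimensional.span_of_finite ℂ (Set.finite_range w)
  calc Fintype.card ιA = Module.finrank ℂ (Submodule.span ℂ (Set.range (flatten φ))) :=
        (finrank_span_eq_card hφ).symm
    _ ≤ Module.finrank ℂ (Submodule.span ℂ (Set.range w)) := Submodule.finrank_mono hspan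
    _ ≤ r := (finrank_range_le_card w).trans_eq (Fintype.card_fin r)

end TensorRank

section UnitTensor

variable (ι : Type*) [DecidableEq ι]

def unitTensor : ι → ι → ι → ℂ :=
  fun i j k => if i = j ∧ j = k then 1 else 0

theorem unitTensor_eq_sum [Fintype ι] {r : ℕ} (e : Fin r ≃ ι) (i j k : ι) :
    unitTensor ι i j k = ∑ l, (if i = e l then 1 else 0) * (if j = e l then 1 else 0) *
      (if k = e l then 1 else 0) := by
  rw [e.sum_comp fun m => (if i = m then (1 : ℂ) else 0) * (if j = m then 1 else 0) *
    (if k = m then 1 else 0)]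
  by_cases hij : i = j <;> by_cases hjk : j = k <;> simp [unitTensor, hij, hjk]

theorem linearIndependent_flatten_unitTensor :
    LinearIndependent ℂ (flatten (unitTensor ι)) := by
  rw [linearIndependent_iff']
  intro s g hg i hi
  simpa [flatten, unitTensor, Finset.sum_apply, hi] using congrFun hg (i, i)

theorem trank_unitTensor [Fintype ι] : trank (unitTensor ι) = Fintype.card ι := by
  set e : Fin (Fintype.card ι) ≃ ι := (Fintype.equivFin ι).symm
  set δ : Fin (Fintype.card ι) → ι → ℂ := fun l i => if i = e l then 1 else 0
  have hsum : ∀ i j k, unitTensor ι i j k = ∑ l, δ l i * δ l j * δ l k :=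
    unitTensor_eq_sum ι e
  refine le_antisymm (trank_le_of_eq_sum δ δ δ hsum) (le_csInf ⟨_, δ, δ, δ, hsum⟩ ?_)
  rintro r ⟨a, b, c, h⟩
  exact card_le_of_linearIndependent_of_eq_sum (linearIndependent_flatten_unitTensor ι) a b c h

theorem prod_unitTensor {κ : Type*} [Fintype κ] (x y z : κ → ι) :
    ∏ t, unitTensor ι (x t) (y t) (z t) = unitTensor (κ → ι) x y z := by
  simp only [unitTensor, Finset.prod_boole, Finset.mem_univ, true_implies, funext_iff, forall_and]

end UnitTensor

theorem GHZ_eq_unitTensor : GHZ = unitTensor (Fin 2) := rfl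

/-- rk(GHZ) = 2 and rk(GHZ^{⊗n}) = 2^n (each party's n qubits grouped together). -/
theorem trank_GHZ_pow :
    trank GHZ = 2 ∧
    ∀ n : ℕ, trank (fun x y z : Fin n → Fin 2 => ∏ t, GHZ (x t) (y t) (z t)) = 2 ^ n := by
  refine ⟨by simp [GHZ_eq_unitTensor, trank_unitTensor], fun n => ?_⟩
  simp [GHZ_eq_unitTensor, prod_unitTensor, trank_unitTensor]
end

section
/- If 2n copies of GHZ can be converted by local linear maps into n copies of |Φ^3⟩, i.e., (A⊗B⊗C)|GHZ⟩^{⊗2n} = |Φ^3⟩^{⊗n}, then rk(⟨2^n,2^n,2^n⟩) ≤ 4^n. Since the rank of the N×N matrix multiplication tensor is at least (5/2)N² − 3N > N² for N ≥ 3, no such conversion exists for n ≥ 2. -/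
/-- The triangle of three EPR pairs: Φ³ = Σ_{i,j,k} |ij⟩_A |jk⟩_B |ki⟩_C. -/
def Phi3 : (Fin 2 × Fin 2) → (Fin 2 × Fin 2) → (Fin 2 × Fin 2) → ℂ :=
  fun a b c => if a.2 = b.1 ∧ b.2 = c.1 ∧ c.2 = a.1 then 1 else 0

/-- The N×N matrix multiplication tensor ⟨N,N,N⟩ = Σ E_ij ⊗ E_jk ⊗ E_ki. -/
def MMT (N : ℕ) : (Fin N × Fin N) → (Fin N × Fin N) → (Fin N × Fin N) → ℂ :=
  fun p q r => if p.2 = q.1 ∧ q.2 = r.1 ∧ r.2 = p.1 then 1 else 0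

/-- 2n copies of GHZ (a diagonal tensor of rank 2^{2n} = 4^n) can be converted by local
linear maps into n copies of Φ³. -/
def ConvertGHZtoPhi3 (n : ℕ) : Prop :=
  ∃ (A B C : (Fin n → Fin 2 × Fin 2) → Fin (2 ^ (2 * n)) → ℂ),
    ∀ x y z : Fin n → Fin 2 × Fin 2,
      (∏ t, Phi3 (x t) (y t) (z t)) = ∑ l, A x l * B y l * C z l

namespace GhzAux

open Matrix

/-- `Mm F` is the `ι×ι` matrix `[i.2 = j.1] * F i.1 j.2`, the slice of MMT contracted with F. -/
def Mm (N : ℕ) (F : Matrix (Fin N) (Fin N) ℂ) :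
    Matrix (Fin N × Fin N) (Fin N × Fin N) ℂ :=
  Matrix.of fun i j => if i.2 = j.1 then F i.1 j.2 else 0

lemma Mm_mul {N : ℕ} (F G : Matrix (Fin N) (Fin N) ℂ) :
    Mm N F * Mm N G = Matrix.of fun i j => F i.1 j.1 * G i.2 j.2 := by
  ext i j
  simp only [Matrix.mul_apply, Mm, Matrix.of_apply, Fintype.sum_prod_type]
  simp [ite_mul, mul_ite, Finset.sum_ite_eq, Finset.sum_ite_eq']

lemma Mm_one_mul_one {N : ℕ} : Mm N 1 * Mm N 1 = 1 := by
  rw [Mm_mul]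
  ext i j
  by_cases h1 : i.1 = j.1 <;> by_cases h2 : i.2 = j.2 <;>
    simp [Matrix.one_apply, Prod.ext_iff, h1, h2]

lemma kron_mul {N : ℕ} (F G F' G' : Matrix (Fin N) (Fin N) ℂ) :
    (Matrix.of fun (i j : Fin N × Fin N) => F i.1 j.1 * G i.2 j.2) *
      (Matrix.of fun (i j : Fin N × Fin N) => F' i.1 j.1 * G' i.2 j.2) =
    Matrix.of fun (i j : Fin N × Fin N) => (F * F') i.1 j.1 * (G * G') i.2 j.2 := by
  ext i j
  simp only [Matrix.mul_apply, Matrix.of_apply, Fintype.sum_prod_type]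
  rw [Finset.sum_mul_sum]
  apply Finset.sum_congr rfl
  intro p1 _
  apply Finset.sum_congr rfl
  intro p2 _
  ring

lemma mmt_no_square_decomp (N : ℕ) (hN : 2 ≤ N)
    (a b c : (Fin N × Fin N) → (Fin N × Fin N) → ℂ)
    (h : ∀ i j k, MMT N i j k = ∑ l, a l i * b l j * c l k) : False := by
  classical
  set P : Matrix (Fin N × Fin N) (Fin N × Fin N) ℂ := Matrix.of fun i l => a l i with hP
  set B' : Matrix (Fin N × Fin N) (Fin N × Fin N) ℂ := Matrix.of fun l j => b l j with hB'
  set d : Matrix (Fin N) (Fin N) ℂ → (Fin N × Fin N) → ℂ := fun F l => ∑ k, F k.2 k.1 * c l k with hdd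
  have hdec : ∀ F, P * Matrix.diagonal (d F) * B' = Mm N F := by
    intro F
    ext i j
    rw [Matrix.mul_apply]
    simp only [Matrix.mul_diagonal, hP, hB', Matrix.of_apply, hdd]
    calc ∑ l, a l i * (∑ k, F k.2 k.1 * c l k) * b l j
        = ∑ l, ∑ k : (Fin N × Fin N), F k.2 k.1 * (a l i * b l j * c l k) := by
          congr 1; funext l; rw [Finset.mul_sum, Finset.sum_mul]; congr 1; funext k; ring
      _ = ∑ k : (Fin N × Fin N), F k.2 k.1 * ∑ l, (a l i * b l j * c l k) := by
          rw [Finset.sum_comm]; congr 1; funext k; rw [Finset.mul_sum]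
      _ = ∑ k : (Fin N × Fin N), F k.2 k.1 * MMT N i j k := by
          congr 1; funext k; rw [← h i j k]
      _ = Mm N F i j := by
          by_cases hij : i.2 = j.1 <;>
            simp [MMT, Mm, hij, Fintype.sum_prod_type, mul_ite, ite_and,
              Finset.sum_ite_eq, Finset.sum_ite_eq']
  set R : Matrix (Fin N × Fin N) (Fin N × Fin N) ℂ := B' * Mm N 1 with hR
  have hPQ : P * (Matrix.diagonal (d 1) * R) = 1 := by
    have : P * Matrix.diagonal (d 1) * B' * Mm N 1 = 1 := by
      rw [hdec 1, Mm_one_mul_one]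
    calc P * (Matrix.diagonal (d 1) * R) = P * Matrix.diagonal (d 1) * B' * Mm N 1 := by
          simp only [hR, Matrix.mul_assoc]
      _ = 1 := this
  have hQP : Matrix.diagonal (d 1) * R * P = 1 := mul_eq_one_comm.mp hPQ
  have hS : Matrix.diagonal (d 1) * (R * P) = 1 := by rw [← Matrix.mul_assoc]; exact hQP
  have hSentry : ∀ l m : (Fin N × Fin N), d 1 l * (R * P) l m = (1 : Matrix (Fin N × Fin N) (Fin N × Fin N) ℂ) l m := by
    intro l m
    rw [← Matrix.diagonal_mul, hS]
  have hd1 : ∀ l : (Fin N × Fin N), d 1 l ≠ 0 := by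
    intro l
    have := hSentry l l
    rw [Matrix.one_apply_eq] at this
    exact left_ne_zero_of_mul_eq_one this
  have hSdiag : R * P = Matrix.diagonal (fun l => (d 1 l)⁻¹) := by
    ext l m
    rcases eq_or_ne l m with rfl | hlm
    · have := hSentry l l
      rw [Matrix.one_apply_eq] at this
      rw [Matrix.diagonal_apply_eq]
      exact mul_left_cancel₀ (hd1 l) (this.trans (mul_inv_cancel₀ (hd1 l)).symm)
    · have := hSentry l m
      rw [Matrix.one_apply_ne hlm] at this
      rw [Matrix.diagonal_apply_ne _ hlm]
      exact (mul_eq_zero.mp this).resolve_left (hd1 l)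
  have mid : ∀ F G : Matrix (Fin N) (Fin N) ℂ,
      Matrix.diagonal (d F) * Matrix.diagonal (fun l => (d 1 l)⁻¹) * Matrix.diagonal (d G)
        = Matrix.diagonal (d G) * Matrix.diagonal (fun l => (d 1 l)⁻¹) * Matrix.diagonal (d F) := by
    intro F G
    simp only [Matrix.diagonal_mul_diagonal]
    exact congrArg Matrix.diagonal (funext fun l => by ring)
  have hX : ∀ F, Mm N F * Mm N 1 = P * Matrix.diagonal (d F) * R := by
    intro F
    rw [← hdec F]
    simp only [hR, Matrix.mul_assoc]
  have comm : ∀ F G : Matrix (Fin N) (Fin N) ℂ,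
      (Mm N F * Mm N 1) * (Mm N G * Mm N 1) = (Mm N G * Mm N 1) * (Mm N F * Mm N 1) := by
    intro F G
    rw [hX F, hX G]
    calc P * Matrix.diagonal (d F) * R * (P * Matrix.diagonal (d G) * R)
        = P * (Matrix.diagonal (d F) * (R * P) * Matrix.diagonal (d G)) * R := by
          simp only [Matrix.mul_assoc]
      _ = P * (Matrix.diagonal (d G) * (R * P) * Matrix.diagonal (d F)) * R := by
          rw [hSdiag, mid, ← hSdiag]
      _ = P * Matrix.diagonal (d G) * R * (P * Matrix.diagonal (d F) * R) := by
          simp only [Matrix.mul_assoc]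
  have hcomm : ∀ F G : Matrix (Fin N) (Fin N) ℂ, F * G = G * F := by
    intro F G
    have hc := comm F G
    rw [Mm_mul F 1, Mm_mul G 1, kron_mul, kron_mul] at hc
    ext i j
    have h2 := congrFun (congrFun hc (i, i)) (j, i)
    simpa [Matrix.one_apply] using h2
  -- now the contradiction: explicit non-commuting matrices
  have h0 : 0 < N := by omega
  have h1 : 1 < N := by omega
  set i0 : Fin N := ⟨0, h0⟩
  set i1 : Fin N := ⟨1, h1⟩
  have hne : i1 ≠ i0 := by
    simp [i0, i1, Fin.ext_iff]
  have hcm := hcomm (Matrix.single i0 i1 (1:ℂ)) (Matrix.single i1 i0 (1:ℂ))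
  rw [Matrix.single_mul_single_same, Matrix.single_mul_single_same] at hcm
  have := congrFun (congrFun hcm i0) i0
  rw [Matrix.single_apply_same,
    Matrix.single_apply_of_ne _ _ _ _ _ (by tauto)] at this
  norm_num at this

lemma convert_decomp (n : ℕ) (h : ConvertGHZtoPhi3 n) :
    ∃ a b c : Fin (2 ^ (2 * n)) → (Fin (2 ^ n) × Fin (2 ^ n)) → ℂ,
      ∀ i j k, MMT (2 ^ n) i j k = ∑ l, a l i * b l j * c l k := by
  obtain ⟨A, B, C, hABC⟩ := h
  let E : Fin (2 ^ n) ≃ (Fin n → Fin 2) := finFunctionFinEquiv.symm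
  let g : Fin (2 ^ n) × Fin (2 ^ n) → (Fin n → Fin 2 × Fin 2) :=
    fun p t => (E p.1 t, E p.2 t)
  have hE : ∀ u v : Fin (2 ^ n), (∀ t, E u t = E v t) ↔ u = v := fun u v => by
    rw [← funext_iff, E.injective.eq_iff]
  have key : ∀ i j k, MMT (2 ^ n) i j k = ∏ t, Phi3 (g i t) (g j t) (g k t) := by
    intro i j k
    have hcond : (i.2 = j.1 ∧ j.2 = k.1 ∧ k.2 = i.1) ↔
        (∀ t, (g i t).2 = (g j t).1 ∧ (g j t).2 = (g k t).1 ∧ (g k t).2 = (g i t).1) := by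
      simp only [g, forall_and]
      rw [hE, hE, hE]
    simp only [MMT, Phi3]
    rw [Finset.prod_boole]
    simp only [Finset.mem_univ, forall_true_left]
    exact if_congr hcond rfl rfl
  exact ⟨fun l i => A (g i) l, fun l j => B (g j) l, fun l k => C (g k) l,
    fun i j k => (key i j k).trans (hABC (g i) (g j) (g k))⟩

end GhzAux

/-- If 2n GHZ states convert to n copies of Φ³ then rk⟨2^n,2^n,2^n⟩ ≤ 4^n; since the rank
of N×N matrix multiplication exceeds N², no such conversion exists for n ≥ 2. -/
theorem ghz_to_phi3_impossible (n : ℕ) :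
    (ConvertGHZtoPhi3 n → trank (MMT (2 ^ n)) ≤ 4 ^ n) ∧
    (2 ≤ n → ¬ ConvertGHZtoPhi3 n) := by
  have h4 : (4 : ℕ) ^ n = 2 ^ (2 * n) := by
    rw [pow_mul]; norm_num
  constructor
  · intro h
    obtain ⟨a, b, c, hd⟩ := GhzAux.convert_decomp n h
    apply Nat.sInf_le
    refine ⟨fun l => a (finCongr h4 l), fun l => b (finCongr h4 l), fun l => c (finCongr h4 l), ?_⟩
    intro i j k
    rw [hd i j k]
    exact (Equiv.sum_comp (finCongr h4) _).symm
  · intro hn h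
    obtain ⟨a, b, c, hd⟩ := GhzAux.convert_decomp n h
    have hcard : Fintype.card (Fin (2 ^ n) × Fin (2 ^ n)) = Fintype.card (Fin (2 ^ (2 * n))) := by
      simp [two_mul, pow_add]
    let ee := Fintype.equivOfCardEq hcard
    refine GhzAux.mmt_no_square_decomp (2 ^ n) ?_
      (fun l => a (ee l)) (fun l => b (ee l)) (fun l => c (ee l)) ?_
    · calc 2 = 2 ^ 1 := by norm_num
        _ ≤ 2 ^ n := Nat.pow_le_pow_right (by norm_num) (by omega)
    · intro i j k
      rw [hd i j k]
      exact (Equiv.sum_comp ee _).symm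
end
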